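/- Define, for 0 < ε and 0 < α, the function f_{α,ε} : ℝ² → ℝ by f_{α,ε}(x) = ε²/(ε² + ‖x‖²) if ‖x‖ ≤ α and f_{α,ε}(x) = ε²/(ε² + α²) if ‖x‖ > α, and let f(x) = 2/(1 + ‖x‖²). Then for all fixed 0 < α ≤ δ, limsup_{ε → 0⁺} ε^{-2} ∫_{B(0,2δ)} f(x/ε)³ · f_{α,ε}(x)^{-1} dx ≤ 8π. -/

import Mathlib

open MeasureTheory Real Filter

/-!
Since `f(x/ε) = 2ε²/(ε² + ‖x‖²)` and `f_{α,ε}(x) ≥ ε²/(ε² + ‖x‖²)` (for `‖x‖ > α` because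
`α² < ‖x‖²`), the integrand is at most `2 f(x/ε)²`. Enlarging the ball to the whole plane and
rescaling, `ε⁻² ∫ 2 f(x/ε)² dx = 2 ∫ f² = 8π` for every `ε > 0`.
-/

/-- The conformal factor `f_{α,ε}` on the plane. -/
noncomputable def fae (α ε : ℝ) (x : EuclideanSpace ℝ (Fin 2)) : ℝ :=
  if ‖x‖ ≤ α then ε ^ 2 / (ε ^ 2 + ‖x‖ ^ 2) else ε ^ 2 / (ε ^ 2 + α ^ 2)

/-- The round-sphere conformal factor `f(x) = 2/(1+|x|²)`. -/
noncomputable def fsph (x : EuclideanSpace ℝ (Fin 2)) : ℝ :=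
  2 / (1 + ‖x‖ ^ 2)

lemma integral_Ioi_mul_two_div_one_add_sq_sq :
    ∫ r in Set.Ioi (0 : ℝ), r * (2 / (1 + r ^ 2)) ^ 2 = 2 := by
  have hderiv : ∀ r ∈ Set.Ioi (0 : ℝ),
      HasDerivAt (fun r : ℝ => -2 / (1 + r ^ 2)) (r * (2 / (1 + r ^ 2)) ^ 2) r := by
    intro r _
    have hden : HasDerivAt (fun r : ℝ => 1 + r ^ 2) (2 * r) r := by
      simpa using (hasDerivAt_pow 2 r).const_add 1
    exact ((hasDerivAt_const r (-2 : ℝ)).fun_div hden (by positivity)).congr_deriv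
      (by rw [div_pow]; ring)
  have hnonneg : ∀ r ∈ Set.Ioi (0 : ℝ), 0 ≤ r * (2 / (1 + r ^ 2)) ^ 2 :=
    fun r (hr : 0 < r) => by positivity
  have hcont : ContinuousWithinAt (fun r : ℝ => -2 / (1 + r ^ 2)) (Set.Ici 0) 0 :=
    (continuous_const.div (by fun_prop) fun r => by positivity).continuousWithinAt
  have hlim : Tendsto (fun r : ℝ => -2 / (1 + r ^ 2)) atTop (nhds 0) :=
    tendsto_const_nhds.div_atTop
      (tendsto_atTop_add_const_left _ 1 (tendsto_pow_atTop two_ne_zero))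
  rw [integral_Ioi_of_hasDerivAt_of_nonneg hcont hderiv hnonneg hlim]
  norm_num

lemma integrable_fsph_sq : Integrable fun x : EuclideanSpace ℝ (Fin 2) => fsph x ^ 2 := by
  have hdim : (Module.finrank ℝ (EuclideanSpace ℝ (Fin 2)) : ℝ) < 4 := by
    rw [finrank_euclideanSpace_fin]; norm_num
  refine ((integrable_rpow_neg_one_add_norm_sq (μ := volume) hdim).const_mul 4).congr
    (ae_of_all _ fun x => ?_)
  dsimp only
  have hx : (0 : ℝ) < 1 + ‖x‖ ^ 2 := by positivity
  rw [fsph, show (-4 : ℝ) / 2 = -(2 : ℕ) by norm_num, rpow_neg hx.le, rpow_natCast]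
  field_simp
  norm_num

lemma integral_fsph_sq : ∫ x : EuclideanSpace ℝ (Fin 2), fsph x ^ 2 = 4 * π := by
  have hball : volume.real (Metric.ball (0 : EuclideanSpace ℝ (Fin 2)) 1) = π := by
    simp [measureReal_def, pi_pos.le]
  simp only [fsph]
  rw [integral_fun_norm_addHaar volume (fun r : ℝ => (2 / (1 + r ^ 2)) ^ 2), hball,
    finrank_euclideanSpace_fin]
  norm_num [integral_Ioi_mul_two_div_one_add_sq_sq]
  ring

lemma fsph_inv_smul {ε : ℝ} (hε : 0 < ε) (x : EuclideanSpace ℝ (Fin 2)) :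
    fsph (ε⁻¹ • x) = 2 * ε ^ 2 / (ε ^ 2 + ‖x‖ ^ 2) := by
  rw [fsph, norm_smul, norm_inv, norm_eq_abs, abs_of_pos hε, mul_pow]
  field_simp

lemma fsph_pos (x : EuclideanSpace ℝ (Fin 2)) : 0 < fsph x := by
  rw [fsph]; positivity

lemma fae_nonneg (α ε : ℝ) (x : EuclideanSpace ℝ (Fin 2)) : 0 ≤ fae α ε x := by
  rw [fae]
  split_ifs <;> positivity

lemma integral_fsph_inv_smul_sq {ε : ℝ} (hε : 0 < ε) :
    ∫ x : EuclideanSpace ℝ (Fin 2), fsph (ε⁻¹ • x) ^ 2 = ε ^ 2 * (4 * π) := by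
  rw [Measure.integral_comp_inv_smul_of_nonneg volume (fun x => fsph x ^ 2) hε.le,
    finrank_euclideanSpace_fin, integral_fsph_sq, smul_eq_mul]

lemma fsph_inv_smul_div_two_le_fae {α ε : ℝ} (hα : 0 ≤ α) (hε : 0 < ε)
    (x : EuclideanSpace ℝ (Fin 2)) : fsph (ε⁻¹ • x) / 2 ≤ fae α ε x := by
  have hhalf : fsph (ε⁻¹ • x) / 2 = ε ^ 2 / (ε ^ 2 + ‖x‖ ^ 2) := by
    rw [fsph_inv_smul hε]; ring
  rw [hhalf, fae]
  split_ifs with hx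
  · rfl
  · have : α ^ 2 ≤ ‖x‖ ^ 2 := pow_le_pow_left₀ hα (not_le.1 hx).le 2
    gcongr

lemma fsph_inv_smul_cube_mul_inv_fae_le {α ε : ℝ} (hα : 0 ≤ α) (hε : 0 < ε)
    (x : EuclideanSpace ℝ (Fin 2)) :
    fsph (ε⁻¹ • x) ^ 3 * (fae α ε x)⁻¹ ≤ 2 * fsph (ε⁻¹ • x) ^ 2 := by
  have := fsph_pos (ε⁻¹ • x)
  calc fsph (ε⁻¹ • x) ^ 3 * (fae α ε x)⁻¹
      ≤ fsph (ε⁻¹ • x) ^ 3 * (fsph (ε⁻¹ • x) / 2)⁻¹ := by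
        gcongr
        exact fsph_inv_smul_div_two_le_fae hα hε x
    _ = 2 * fsph (ε⁻¹ • x) ^ 2 := by field_simp

lemma fsph_inv_smul_cube_mul_inv_fae_nonneg (α ε : ℝ) (x : EuclideanSpace ℝ (Fin 2)) :
    0 ≤ fsph (ε⁻¹ • x) ^ 3 * (fae α ε x)⁻¹ := by
  have := fsph_pos (ε⁻¹ • x)
  have := fae_nonneg α ε x
  positivity

lemma inv_sq_mul_setIntegral_le {α ε : ℝ} (hα : 0 ≤ α) (hε : 0 < ε)
    (s : Set (EuclideanSpace ℝ (Fin 2))) :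
    (ε ^ 2)⁻¹ * ∫ x in s, fsph (ε⁻¹ • x) ^ 3 * (fae α ε x)⁻¹ ≤ 8 * π := by
  have hmaj : Integrable fun x : EuclideanSpace ℝ (Fin 2) => 2 * fsph (ε⁻¹ • x) ^ 2 :=
    ((integrable_comp_smul_iff volume (fun x => fsph x ^ 2) (inv_ne_zero hε.ne')).2
      integrable_fsph_sq).const_mul 2
  have hint : ∫ x in s, fsph (ε⁻¹ • x) ^ 3 * (fae α ε x)⁻¹ ≤ 2 * (ε ^ 2 * (4 * π)) :=
    calc ∫ x in s, fsph (ε⁻¹ • x) ^ 3 * (fae α ε x)⁻¹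
        ≤ ∫ x in s, 2 * fsph (ε⁻¹ • x) ^ 2 :=
          integral_mono_of_nonneg (ae_of_all _ (fsph_inv_smul_cube_mul_inv_fae_nonneg α ε)) hmaj.integrableOn
            (ae_of_all _ (fsph_inv_smul_cube_mul_inv_fae_le hα hε))
      _ ≤ ∫ x, 2 * fsph (ε⁻¹ • x) ^ 2 :=
          setIntegral_le_integral hmaj (ae_of_all _ fun x => by positivity)
      _ = 2 * (ε ^ 2 * (4 * π)) := by
          rw [integral_const_mul, integral_fsph_inv_smul_sq hε]
  calc (ε ^ 2)⁻¹ * ∫ x in s, fsph (ε⁻¹ • x) ^ 3 * (fae α ε x)⁻¹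
      ≤ (ε ^ 2)⁻¹ * (2 * (ε ^ 2 * (4 * π))) := by gcongr
    _ = 8 * π := by field_simp; ring

theorem stmt_6_general (α δ : ℝ) (hα : 0 < α) :
    Filter.limsup (fun ε : ℝ =>
        (ε ^ 2)⁻¹ * ∫ x in Metric.ball (0 : EuclideanSpace ℝ (Fin 2)) (2 * δ),
          (fsph (ε⁻¹ • x)) ^ 3 * (fae α ε x)⁻¹)
      (nhdsWithin 0 (Set.Ioi 0)) ≤ 8 * π := by
  have hle : ∀ᶠ ε in nhdsWithin (0 : ℝ) (Set.Ioi 0),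
      (ε ^ 2)⁻¹ * (∫ x in Metric.ball (0 : EuclideanSpace ℝ (Fin 2)) (2 * δ),
        (fsph (ε⁻¹ • x)) ^ 3 * (fae α ε x)⁻¹) ≤ 8 * π := by
    filter_upwards [self_mem_nhdsWithin] with ε hε
    exact inv_sq_mul_setIntegral_le hα.le hε _
  have hnonneg : ∀ ε : ℝ, 0 ≤ (ε ^ 2)⁻¹ * ∫ x in Metric.ball (0 : EuclideanSpace ℝ (Fin 2))
      (2 * δ), (fsph (ε⁻¹ • x)) ^ 3 * (fae α ε x)⁻¹ := fun ε =>
    mul_nonneg (by positivity) (integral_nonneg (fsph_inv_smul_cube_mul_inv_fae_nonneg α ε))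
  exact limsup_le_of_le (isCoboundedUnder_le_of_eventually_le _
    (Eventually.of_forall hnonneg)) hle

theorem stmt_6 (α δ : ℝ) (hα : 0 < α) (hαδ : α ≤ δ) :
    Filter.limsup (fun ε : ℝ =>
        (ε ^ 2)⁻¹ * ∫ x in Metric.ball (0 : EuclideanSpace ℝ (Fin 2)) (2 * δ),
          (fsph (ε⁻¹ • x)) ^ 3 * (fae α ε x)⁻¹)
      (nhdsWithin 0 (Set.Ioi 0)) ≤ 8 * π :=
  stmt_6_general α δ hα
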